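/- arXiv:1312.1070 — 4 statements merged into one kernel-verified Lean document; each statement's English description precedes it below -/
import Mathlib

section
/- Let R be a finitely branching binary relation on a type S of states and φ : S → Prop, and let R₁ = refine(R,φ). Then a state s satisfies EG φ with respect to R if and only if for every natural number k, s belongs to pre^k_{R₁}(φ), i.e. for every k there is a finite trace of R₁ of length k from s whose last state satisfies φ. -/
/-- An infinite trace of `R` starting from `s`. -/
def InfTrace {S : Type*} (R : S → S → Prop) (s : S) (π : ℕ → S) : Prop :=
  π 0 = s ∧ ∀ i, R (π i) (π (i + 1))

/-- A finite trace of `R` of length `k` starting from `s`. -/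
def FinTrace {S : Type*} (R : S → S → Prop) (k : ℕ) (s : S) (π : ℕ → S) : Prop :=
  π 0 = s ∧ ∀ i < k, R (π i) (π (i + 1))

/-- `s` satisfies `EG φ` with respect to `R`. -/
def EG {S : Type*} (R : S → S → Prop) (φ : S → Prop) (s : S) : Prop :=
  ∃ π : ℕ → S, InfTrace R s π ∧ ∀ i, φ (π i)

/-- The refinement of `R` by `φ`. -/
def refine {S : Type*} (R : S → S → Prop) (φ : S → Prop) : S → S → Prop :=
  fun s t => R s t ∧ φ s

/-- `s` belongs to `pre*_R(X)`. -/
def preStar {S : Type*} (R : S → S → Prop) (X : S → Prop) (s : S) : Prop :=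
  ∃ (k : ℕ) (π : ℕ → S), FinTrace R k s π ∧ X (π k)

/-- `R` is finitely branching. -/
def FinBranching {S : Type*} (R : S → S → Prop) : Prop :=
  ∀ s : S, {t | R s t}.Finite

/-- Auxiliary predicate: traces of every length exist. -/
def AllLen {S : Type*} (R : S → S → Prop) (φ : S → Prop) (t : S) : Prop :=
  ∀ k : ℕ, ∃ π : ℕ → S, FinTrace (refine R φ) k t π ∧ φ (π k)

lemma trunc {S : Type*} {R : S → S → Prop} {φ : S → Prop} {t : S} {π : ℕ → S}
    {m k : ℕ} (hkm : k ≤ m) (h : FinTrace (refine R φ) m t π ∧ φ (π m)) :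
    FinTrace (refine R φ) k t π ∧ φ (π k) := by
  obtain ⟨⟨h0, hstep⟩, hend⟩ := h
  refine ⟨⟨h0, fun i hi => hstep i (lt_of_lt_of_le hi hkm)⟩, ?_⟩
  rcases eq_or_lt_of_le hkm with rfl | hlt
  · exact hend
  · exact (hstep k hlt).2

lemma allLen_step {S : Type*} {R : S → S → Prop} {φ : S → Prop}
    (hfb : FinBranching R) {t : S} (ht : AllLen R φ t) :
    φ t ∧ ∃ u, R t u ∧ AllLen R φ u := by
  obtain ⟨π0, ⟨h00, _⟩, hφ0⟩ := ht 0
  refine ⟨h00 ▸ hφ0, ?_⟩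
  -- for each k, pick a successor with a length-k trace
  have hsel : ∀ k : ℕ, ∃ u : {u // R t u},
      ∃ π : ℕ → S, FinTrace (refine R φ) k u.1 π ∧ φ (π k) := by
    intro k
    obtain ⟨π, ⟨h0, hstep⟩, hend⟩ := ht (k + 1)
    have hR : R t (π 1) := h0 ▸ (hstep 0 (Nat.succ_pos k)).1
    refine ⟨⟨π 1, hR⟩, fun i => π (i + 1), ⟨rfl, fun i hi => ?_⟩, hend⟩
    exact hstep (i + 1) (by omega)
  choose f hf using hsel
  haveI : Finite {u // R t u} := (hfb t).to_subtype
  haveI : Infinite ℕ := inferInstance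
  obtain ⟨u, hu⟩ := Finite.exists_infinite_fiber f
  refine ⟨u.1, u.2, fun k => ?_⟩
  obtain ⟨m, hm, hmk⟩ := (Set.infinite_coe_iff.mp hu).exists_gt k
  have := hf m
  rw [show f m = u from hm] at this
  obtain ⟨π, hπ⟩ := this
  exact ⟨π, trunc hmk.le hπ⟩

/-- for finitely branching `R`, `s ⊨ EG φ` iff `s ∈ pre^k_{R₁}(φ)`
for all `k`, where `R₁ = refine R φ`. -/
theorem eg_iff_forall_preK {S : Type*} (R : S → S → Prop) (φ : S → Prop)
    (hfb : FinBranching R) (s : S) :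
    EG R φ s ↔
      ∀ k : ℕ, ∃ π : ℕ → S, FinTrace (refine R φ) k s π ∧ φ (π k) := by
  constructor
  · rintro ⟨π, ⟨h0, hstep⟩, hφ⟩ k
    exact ⟨π, ⟨h0, fun i _ => ⟨hstep i, hφ i⟩⟩, hφ k⟩
  · intro hs
    have key : ∀ t : {t // AllLen R φ t}, ∃ u : {t // AllLen R φ t}, R t.1 u.1 :=
      fun t => by
        obtain ⟨_, u, hRu, hu⟩ := allLen_step hfb t.2
        exact ⟨⟨u, hu⟩, hRu⟩
    choose g hg using key
    let σ : ℕ → {t // AllLen R φ t} := fun i => g^[i] ⟨s, hs⟩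
    refine ⟨fun i => (σ i).1, ⟨rfl, fun i => ?_⟩, fun i => ?_⟩
    · show R (σ i).1 (σ (i + 1)).1
      rw [show σ (i + 1) = g (σ i) from Function.iterate_succ_apply' g i _]
      exact hg (σ i)
    · exact (allLen_step hfb (σ i).2).1
end

section
/- Let R be a binary relation on a type S of states, φ : S → Prop, and R₁ = refine(R,φ). If a state s belongs to pre*_{R₁}(X), where X = {t | t satisfies EG φ with respect to R}, then s itself satisfies EG φ with respect to R. In other words, any state from which a state satisfying EG φ is reachable in the refined system itself satisfies EG φ. -/
lemma key {S : Type*} (R : S → S → Prop) (φ : S → Prop) :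
    ∀ (k : ℕ) (s : S) (π : ℕ → S), FinTrace (refine R φ) k s π → EG R φ (π k) →
    EG R φ s := by
  intro k
  induction k with
  | zero => intro s π hπ hEG; rw [← hπ.1]; exact hEG
  | succ k ih =>
    intro s π hπ hEG
    have h1 : EG R φ (π 1) := by
      apply ih (π 1) (fun i => π (i + 1))
      · exact ⟨rfl, fun i hi => hπ.2 (i+1) (by omega)⟩
      · exact hEG
    obtain ⟨σ, ⟨hσ0, hσR⟩, hσφ⟩ := h1
    have hstep := hπ.2 0 (by omega)
    refine ⟨fun n => Nat.rec s (fun n _ => σ n) n, ⟨rfl, ?_⟩, ?_⟩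
    · intro i
      cases i with
      | zero => simpa [hσ0, hπ.1] using hstep.1
      | succ i => exact hσR i
    · intro i
      cases i with
      | zero => simpa [hπ.1] using hstep.2
      | succ i => exact hσφ i

/-- any state from which a state satisfying `EG φ` is reachable in
the refined system itself satisfies `EG φ`. -/
theorem preStar_eg_eg {S : Type*} (R : S → S → Prop) (φ : S → Prop) (s : S)
    (h : preStar (refine R φ) (fun t => EG R φ t) s) :
    EG R φ s := by
  obtain ⟨k, π, hπ, hX⟩ := h
  exact key R φ k s π hπ hX
end

section
/- Let R be a binary relation on a type S of states and let Y be a set of states such that no state in Y has an infinite trace of R starting from it. Write R∖Y for the relation (R∖Y) s t ↔ R s t ∧ t ∉ Y (R with all transitions whose target is in Y removed), and let G = {t | every R-successor of t lies in Y}. Suppose a state s is such that (a) every state reachable from s by a finite trace of R∖Y has at most one (R∖Y)-successor, and (b) s belongs to pre*_{R∖Y}(G). Then s has no infinite trace of R starting from it. (This is the soundness of the grow₂ growth condition of the over-approximation algorithm: if, ignoring transitions into Y, there is only one trace from s and it reaches a state all of whose successors are in Y, then s may be added to Y.) -/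
/-- soundness of the grow₂ condition of the over-approximation
algorithm. -/
theorem grow2_sound {S : Type*} (R : S → S → Prop) (Y : Set S)
    (hY : ∀ t ∈ Y, ¬ ∃ π : ℕ → S, InfTrace R t π)
    (s : S)
    (ha : ∀ (k : ℕ) (π : ℕ → S),
      FinTrace (fun a b => R a b ∧ b ∉ Y) k s π →
      ∀ u₁ u₂ : S, (R (π k) u₁ ∧ u₁ ∉ Y) → (R (π k) u₂ ∧ u₂ ∉ Y) → u₁ = u₂)
    (hb : preStar (fun a b => R a b ∧ b ∉ Y) (fun t => ∀ u : S, R t u → u ∈ Y) s) :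
    ¬ ∃ π : ℕ → S, InfTrace R s π := by
  rintro ⟨σ, hσ0, hσstep⟩
  by_cases h : ∃ i, σ (i + 1) ∈ Y
  · obtain ⟨i, hi⟩ := h
    exact hY _ hi ⟨fun j => σ (i + 1 + j), rfl, fun j => by
      have := hσstep (i + 1 + j); simpa [Nat.add_assoc] using this⟩
  · push_neg at h
    obtain ⟨k, π, ⟨hπ0, hπstep⟩, hG⟩ := hb
    -- σ agrees with π up to k
    have key : ∀ i ≤ k, σ i = π i := by
      intro i hi
      induction i with
      | zero => rw [hσ0, hπ0]
      | succ n ih =>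
        have hn : n ≤ k := Nat.le_of_succ_le hi
        have ihn := ih hn
        have hft : FinTrace (fun a b => R a b ∧ b ∉ Y) n s σ :=
          ⟨hσ0, fun j _ => ⟨hσstep j, h j⟩⟩
        have := ha n σ hft (σ (n + 1)) (π (n + 1))
          ⟨hσstep n, h n⟩ (by rw [ihn]; exact ⟨(hπstep n (Nat.lt_of_succ_le hi)).1,
            (hπstep n (Nat.lt_of_succ_le hi)).2⟩)
        rw [this]
    have hk := key k le_rfl
    have : σ (k + 1) ∈ Y := hG (σ (k + 1)) (by rw [← hk]; exact hσstep k)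
    exact h k this
end

section
/- Let R_ex be the binary relation on ℕ defined by R_ex x y ↔ (x < 100 ∧ y = x + 1) ∨ (0 < x ∧ x < 5 ∧ y = x - 1). Then for all k x : ℕ, there exists a finite trace of R_ex of length exactly k from x whose last state equals 4 if and only if x ≤ 4, x + k ≥ 4, and (Even k → Even x) and (Odd k → Odd x). (This is the paper's computation pre^k_M(x = 4) ≡ (x ≤ 4) ∧ (x ≥ 4 - k) ∧ (even(k) → even(x)) ∧ (odd(k) → odd(x)).) -/
/-- The running-example transition relation of the paper. -/
def Rex : ℕ → ℕ → Prop :=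
  fun x y => (x < 100 ∧ y = x + 1) ∨ (0 < x ∧ x < 5 ∧ y = x - 1)


lemma finTrace_succ_iff (k x : ℕ) :
    (∃ π : ℕ → ℕ, FinTrace Rex (k+1) x π ∧ π (k+1) = 4) ↔
      ∃ y, Rex x y ∧ ∃ π : ℕ → ℕ, FinTrace Rex k y π ∧ π k = 4 := by
  constructor
  · rintro ⟨π, ⟨h0, hstep⟩, hlast⟩
    exact ⟨π 1, h0 ▸ hstep 0 (Nat.succ_pos k),
      fun i => π (i+1), ⟨rfl, fun i hi => hstep (i+1) (by omega)⟩, hlast⟩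
  · rintro ⟨y, hxy, π, ⟨h0, hstep⟩, hlast⟩
    refine ⟨fun i => if i = 0 then x else π (i-1), ⟨by simp, ?_⟩, by simp [hlast]⟩
    intro i hi
    rcases Nat.eq_zero_or_pos i with h | h
    · subst h; simpa [h0] using hxy
    · have h1 : i ≠ 0 := by omega
      have h2 : i + 1 ≠ 0 := by omega
      simp only [h1, h2, if_false]
      have := hstep (i-1) (by omega)
      have e : i - 1 + 1 = i + 1 - 1 := by omega
      rwa [e] at this

lemma rex_arith (k x : ℕ) :
    (∃ y, Rex x y ∧ (y ≤ 4 ∧ 4 ≤ y + k ∧ (Even k → Even y) ∧ (Odd k → Odd y))) ↔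
      (x ≤ 4 ∧ 4 ≤ x + (k+1) ∧ (Even (k+1) → Even x) ∧ (Odd (k+1) → Odd x)) := by
  simp only [Rex, Nat.even_iff, Nat.odd_iff]
  constructor
  · rintro ⟨y, hy, h⟩; omega
  · intro h
    by_cases hx : x < 4
    · exact ⟨x+1, Or.inl ⟨by omega, rfl⟩, by omega⟩
    · exact ⟨x-1, Or.inr ⟨by omega, by omega, rfl⟩, by omega⟩

/-- the paper's computation of `pre^k(x = 4)` in the running
example. -/
theorem preK_running_example (k x : ℕ) :
    (∃ π : ℕ → ℕ, FinTrace Rex k x π ∧ π k = 4) ↔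
      (x ≤ 4 ∧ 4 ≤ x + k ∧ (Even k → Even x) ∧ (Odd k → Odd x)) := by
  induction k generalizing x with
  | zero =>
      constructor
      · rintro ⟨π, ⟨h0, -⟩, hlast⟩
        have : x = 4 := by rw [← h0]; exact hlast
        subst this
        exact ⟨le_rfl, by omega, fun _ => by decide, fun h => absurd h (by decide)⟩
      · rintro ⟨h1, h2, -⟩
        have : x = 4 := by omega
        exact ⟨fun _ => x, ⟨rfl, by omega⟩, this⟩
  | succ k ih =>
      rw [finTrace_succ_iff, ← rex_arith]
      constructor
      · rintro ⟨y, hxy, hy⟩; exact ⟨y, hxy, (ih y).mp hy⟩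
      · rintro ⟨y, hxy, hy⟩; exact ⟨y, hxy, (ih y).mpr hy⟩
end
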